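/- arXiv:1604.04919 — 3 statements merged into one kernel-verified Lean document; each statement's English description precedes it below -/
import Mathlib

section
/- Let λ₁, λ₂ : [0, r₀) → ℝ be functions with λ₁(0) = λ₂(0) = 0 that are continuous at 0, and suppose there exist constants a, b ∈ ℝ and C > 0 with |λ₁(r) − a r| ≤ C(λ₁(r)² + λ₂(r)²) and |λ₂(r) − b r| ≤ C(λ₁(r)² + λ₂(r)²) for all r ∈ [0, r₀). Then λ₁(r) = a r + O(r²) and λ₂(r) = b r + O(r²) as r → 0⁺. -/
/-! Near `r = 0` both parameters are small, so the quadratic error `C (λ₁² + λ₂²)` is at most a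
quarter of `|λ₁| + |λ₂|` and can be absorbed: `|λ₁| + |λ₂| ≤ 2 (|a| + |b|) r`. Feeding this back
into the error term bounds it by `4 C (|a| + |b|)² r²`. -/

open Set Asymptotics Filter Topology

lemma sq_add_sq_le_of_abs_sub_le {a b C r x y : ℝ} (hC : 0 ≤ C) (hr : 0 ≤ r)
    (hsmall : 4 * C * (|x| + |y|) ≤ 1)
    (h₁ : |x - a * r| ≤ C * (x ^ 2 + y ^ 2)) (h₂ : |y - b * r| ≤ C * (x ^ 2 + y ^ 2)) :
    x ^ 2 + y ^ 2 ≤ (2 * (|a| + |b|) * r) ^ 2 := by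
  have hsq : x ^ 2 + y ^ 2 ≤ (|x| + |y|) ^ 2 := by
    nlinarith [sq_abs x, sq_abs y, abs_nonneg x, abs_nonneg y]
  have habsorb : 4 * C * (x ^ 2 + y ^ 2) ≤ |x| + |y| :=
    calc 4 * C * (x ^ 2 + y ^ 2) ≤ 4 * C * (|x| + |y|) ^ 2 := by gcongr
      _ = 4 * C * (|x| + |y|) * (|x| + |y|) := by ring
      _ ≤ 1 * (|x| + |y|) := by gcongr
      _ = |x| + |y| := one_mul _
  have hlin : |x| + |y| ≤ 2 * (|a| + |b|) * r := by
    have hx := abs_sub_abs_le_abs_sub x (a * r)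
    have hy := abs_sub_abs_le_abs_sub y (b * r)
    rw [abs_mul, abs_of_nonneg hr] at hx hy
    linarith
  calc x ^ 2 + y ^ 2 ≤ (|x| + |y|) ^ 2 := hsq
    _ ≤ (2 * (|a| + |b|) * r) ^ 2 := by gcongr

theorem lambda_linear_expansion {r₀ : ℝ} (hr₀ : 0 < r₀)
    (lam₁ lam₂ : ℝ → ℝ)
    (h₁0 : lam₁ 0 = 0) (h₂0 : lam₂ 0 = 0)
    (hc₁ : ContinuousWithinAt lam₁ (Ici 0) 0)
    (hc₂ : ContinuousWithinAt lam₂ (Ici 0) 0)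
    (a b C : ℝ) (hC : 0 < C)
    (hb₁ : ∀ r ∈ Ico (0:ℝ) r₀, |lam₁ r - a * r| ≤ C * ((lam₁ r) ^ 2 + (lam₂ r) ^ 2))
    (hb₂ : ∀ r ∈ Ico (0:ℝ) r₀, |lam₂ r - b * r| ≤ C * ((lam₁ r) ^ 2 + (lam₂ r) ^ 2)) :
    ((fun r => lam₁ r - a * r) =O[nhdsWithin 0 (Ioi 0)] fun r => r ^ 2) ∧
      ((fun r => lam₂ r - b * r) =O[nhdsWithin 0 (Ioi 0)] fun r => r ^ 2) := by
  have hright : 𝓝[>] (0:ℝ) ≤ 𝓝[≥] 0 := nhdsWithin_mono _ Ioi_subset_Ici_self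
  have hsmall : ∀ᶠ r in 𝓝[>] 0, 4 * C * (|lam₁ r| + |lam₂ r|) ≤ 1 := by
    have h₁ := (h₁0 ▸ hc₁.tendsto).mono_left hright
    have h₂ := (h₂0 ▸ hc₂.tendsto).mono_left hright
    have hlim : Tendsto (fun r => 4 * C * (|lam₁ r| + |lam₂ r|)) (𝓝[>] 0) (𝓝 0) := by
      simpa using (h₁.abs.add h₂.abs).const_mul (4 * C)
    exact hlim.eventually_le_const one_pos
  have hdom : ∀ᶠ r in 𝓝[>] 0, r ∈ Ico (0:ℝ) r₀ :=
    mem_of_superset (Ioo_mem_nhdsGT hr₀) Ioo_subset_Ico_self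
  have hquad : ∀ᶠ r in 𝓝[>] 0,
      C * ((lam₁ r) ^ 2 + (lam₂ r) ^ 2) ≤ C * (2 * (|a| + |b|)) ^ 2 * ‖r ^ 2‖ := by
    filter_upwards [hsmall, hdom] with r hr hrdom
    rw [Real.norm_of_nonneg (sq_nonneg r), mul_assoc, ← mul_pow]
    exact mul_le_mul_of_nonneg_left
      (sq_add_sq_le_of_abs_sub_le hC.le hrdom.1 hr (hb₁ r hrdom) (hb₂ r hrdom)) hC.le
  have hbigO : ∀ f : ℝ → ℝ, (∀ r ∈ Ico (0:ℝ) r₀, |f r| ≤ C * ((lam₁ r) ^ 2 + (lam₂ r) ^ 2)) →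
      f =O[𝓝[>] 0] fun r => r ^ 2 := fun f hf =>
    IsBigO.of_bound _ <| by
      filter_upwards [hquad, hdom] with r hr hrdom
      exact (hf r hrdom).trans hr
  exact ⟨hbigO _ hb₁, hbigO _ hb₂⟩
end

section
/- Let μ be a measure on X and let A_r, B_r (r ∈ [0, r₀)) be families of measurable sets of finite measure with A_0 = B_0. Suppose r ↦ μ(A_r) is differentiable at 0 with derivative d > 0, and r ↦ μ(A_r Δ B_r) is differentiable at 0 with derivative 0 (and value 0 at r = 0). Then r ↦ μ(B_r) is differentiable at 0 with derivative d; in particular there is δ > 0 with μ(B_r) > μ(B_0) for r ∈ (0, δ). -/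
/-!
The inequality |μ(A_r) - μ(B_r)| ≤ μ(A_r ∆ B_r) bounds the difference of the two measure
functions by a function that vanishes to first order at r = 0. Hence both have the same right
derivative d at 0, and a positive right derivative forces μ(B_r) > μ(B_0) just to the right of 0.
-/

open Set Filter Topology MeasureTheory Asymptotics
open scoped symmDiff ENNReal

namespace MeasureTheory

variable {X : Type*} [MeasurableSpace X] {μ : Measure X} {s t : Set X}

theorem measureReal_sub_le_measureReal_symmDiff (hs : μ s ≠ ∞) (ht : μ t ≠ ∞) :
    μ.real s - μ.real t ≤ μ.real (s ∆ t) := by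
  have hst : μ (s ∆ t) ≠ ∞ := measure_symmDiff_ne_top hs ht
  have hs_sub : s ⊆ t ∪ s ∆ t := fun x hx => by by_cases x ∈ t <;> simp_all [mem_symmDiff]
  linarith [measureReal_mono hs_sub (measure_union_ne_top ht hst),
    measureReal_union_le (μ := μ) t (s ∆ t)]

theorem abs_measureReal_sub_le_measureReal_symmDiff_of_ne_top (hs : μ s ≠ ∞) (ht : μ t ≠ ∞) :
    |μ.real s - μ.real t| ≤ μ.real (s ∆ t) :=
  abs_sub_le_iff.2 ⟨measureReal_sub_le_measureReal_symmDiff hs ht,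
    symmDiff_comm s t ▸ measureReal_sub_le_measureReal_symmDiff ht hs⟩

end MeasureTheory

section Deriv

variable {𝕜 F G : Type*} [NontriviallyNormedField 𝕜] [NormedAddCommGroup F] [NormedSpace 𝕜 F]
  [NormedAddCommGroup G] [NormedSpace 𝕜 G] {f g : 𝕜 → F} {h : 𝕜 → G} {f' : F} {s : Set 𝕜} {x : 𝕜}

theorem HasDerivWithinAt.of_norm_sub_le (hf : HasDerivWithinAt f f' s x)
    (hh : HasDerivWithinAt h 0 s x) (hhx : h x = 0) (hx : x ∈ s)
    (hfg : ∀ᶠ y in 𝓝[s] x, ‖g y - f y‖ ≤ ‖h y‖) : HasDerivWithinAt g f' s x := by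
  have hgx : g x = f x := by
    simpa [hhx, sub_eq_zero] using hfg.self_of_nhdsWithin hx
  have hsmall : HasDerivWithinAt (g - f) 0 s x := by
    rw [hasDerivWithinAt_iff_isLittleO] at hh ⊢
    refine IsBigO.trans_isLittleO (IsBigO.of_bound' ?_) hh
    filter_upwards [hfg] with y hy
    simpa [hgx, hhx] using hy
  simpa using hf.add hsmall

end Deriv

theorem HasDerivWithinAt.eventually_lt_of_deriv_pos {f : ℝ → ℝ} {f' x : ℝ}
    (hf : HasDerivWithinAt f f' (Ici x) x) (hf' : 0 < f') : ∀ᶠ y in 𝓝[>] x, f x < f y := by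
  have hslope := (hasDerivWithinAt_iff_tendsto_slope' (lt_irrefl x)).1 hf.Ioi_of_Ici
  filter_upwards [hslope.eventually (eventually_gt_nhds hf'), self_mem_nhdsWithin]
    with y hy hxy using (slope_pos_iff hxy).1 hy

theorem measure_deriv_transfer_general {X : Type*} [MeasurableSpace X] (μ : Measure X)
    {r₀ : ℝ} (hr₀ : 0 < r₀) (A B : ℝ → Set X)
    (hAfin : ∀ r ∈ Ico (0:ℝ) r₀, μ (A r) < ⊤)
    (hBfin : ∀ r ∈ Ico (0:ℝ) r₀, μ (B r) < ⊤)
    (d : ℝ) (hd : 0 < d)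
    (hA' : HasDerivWithinAt (fun r => (μ (A r)).toReal) d (Ici 0) 0)
    (hΔ0 : μ (symmDiff (A 0) (B 0)) = 0)
    (hΔ' : HasDerivWithinAt (fun r => (μ (symmDiff (A r) (B r))).toReal) 0 (Ici 0) 0) :
    HasDerivWithinAt (fun r => (μ (B r)).toReal) d (Ici 0) 0 ∧
      ∃ δ > 0, ∀ r ∈ Ioo (0:ℝ) δ, (μ (B 0)).toReal < (μ (B r)).toReal := by
  have hB : HasDerivWithinAt (fun r => (μ (B r)).toReal) d (Ici 0) 0 := by
    refine hA'.of_norm_sub_le hΔ' (by simp [hΔ0]) self_mem_Ici ?_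
    filter_upwards [Ico_mem_nhdsGE hr₀] with r hr
    rw [Real.norm_eq_abs, abs_sub_comm]
    exact (abs_measureReal_sub_le_measureReal_symmDiff_of_ne_top
      (hAfin r hr).ne (hBfin r hr).ne).trans (le_abs_self _)
  obtain ⟨δ, hδ, hgrowth⟩ :=
    mem_nhdsGT_iff_exists_Ioo_subset.1 (hB.eventually_lt_of_deriv_pos hd)
  exact ⟨hB, δ, hδ, hgrowth⟩

theorem measure_deriv_transfer {X : Type*} [MeasurableSpace X] (μ : Measure X)
    {r₀ : ℝ} (hr₀ : 0 < r₀) (A B : ℝ → Set X)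
    (hAm : ∀ r ∈ Ico (0:ℝ) r₀, MeasurableSet (A r))
    (hBm : ∀ r ∈ Ico (0:ℝ) r₀, MeasurableSet (B r))
    (hAfin : ∀ r ∈ Ico (0:ℝ) r₀, μ (A r) < ⊤)
    (hBfin : ∀ r ∈ Ico (0:ℝ) r₀, μ (B r) < ⊤)
    (h0 : A 0 = B 0)
    (d : ℝ) (hd : 0 < d)
    (hA' : HasDerivWithinAt (fun r => (μ (A r)).toReal) d (Ici 0) 0)
    (hΔ0 : μ (symmDiff (A 0) (B 0)) = 0)
    (hΔ' : HasDerivWithinAt (fun r => (μ (symmDiff (A r) (B r))).toReal) 0 (Ici 0) 0) :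
    HasDerivWithinAt (fun r => (μ (B r)).toReal) d (Ici 0) 0 ∧
      ∃ δ > 0, ∀ r ∈ Ioo (0:ℝ) δ, (μ (B 0)).toReal < (μ (B r)).toReal :=
  measure_deriv_transfer_general μ hr₀ A B hAfin hBfin d hd hA' hΔ0 hΔ'
end

section
/- Let u : [0, r₀) → ℝ² with u(0) = (0,0), u continuous at 0, and suppose u(r) = L r + R(r) where L ∈ ℝ² and |R(r)| ≤ C |u(r)|² for a constant C. Then u is differentiable at 0 with u'(0) = L. -/
/-!
Since `u → 0`, the quadratic error `‖u r‖²` is `o(u r)`, so `u r - r • L = o(u r)` and hence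
`u r = O(r)`. Feeding this back in, `‖u r‖² = o(1) · O(r) = o(r)`, which is exactly
`u r - u 0 - r • L = o(r)`, the little-o form of the one-sided derivative.
-/

open Filter Topology Asymptotics

section

variable {α E F : Type*} [NormedAddCommGroup E] [NormedAddCommGroup F] {l : Filter α}

theorem Asymptotics.isLittleO_norm_sq_of_tendsto_zero {f : α → E} {k : α → F}
    (hf : Tendsto f l (𝓝 0)) (hfk : f =O[l] k) : (fun x => ‖f x‖ ^ 2) =o[l] k := by
  have hsmall : (fun x => ‖f x‖) =o[l] fun _ => (1 : ℝ) :=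
    (isLittleO_one_iff ℝ).2 (tendsto_zero_iff_norm_tendsto_zero.1 hf)
  simpa only [sq, one_mul, isLittleO_norm_right] using hsmall.mul_isBigO hfk.norm_norm

theorem Asymptotics.isBigO_of_sub_isBigO_norm_sq {f g : α → E} (hf : Tendsto f l (𝓝 0))
    (hfg : (fun x => f x - g x) =O[l] fun x => ‖f x‖ ^ 2) : f =O[l] g := by
  have hsub : (fun x => f x - g x) =o[l] f :=
    hfg.trans_isLittleO (isLittleO_norm_sq_of_tendsto_zero hf (isBigO_refl f l))
  simpa only [sub_sub_cancel] using hsub.right_isBigO_sub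

theorem Asymptotics.sub_isLittleO_of_isBigO_norm_sq {f g : α → E} {k : α → F}
    (hf : Tendsto f l (𝓝 0)) (hfg : (fun x => f x - g x) =O[l] fun x => ‖f x‖ ^ 2)
    (hgk : g =O[l] k) : (fun x => f x - g x) =o[l] k :=
  hfg.trans_isLittleO <|
    isLittleO_norm_sq_of_tendsto_zero hf ((isBigO_of_sub_isBigO_norm_sq hf hfg).trans hgk)

end

open Set

theorem hasDerivWithinAt_of_quadratic_selfBound {r₀ : ℝ} (hr₀ : 0 < r₀)
    (u : ℝ → ℝ × ℝ) (hu0 : u 0 = 0)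
    (hc : ContinuousWithinAt u (Ici 0) 0)
    (L : ℝ × ℝ) (C : ℝ)
    (hR : ∀ r ∈ Ico (0:ℝ) r₀, ‖u r - r • L‖ ≤ C * ‖u r‖ ^ 2) :
    HasDerivWithinAt u L (Ici 0) 0 := by
  have htends : Tendsto u (𝓝[Ici 0] 0) (𝓝 0) := hu0 ▸ hc.tendsto
  have hquad : (fun r => u r - r • L) =O[𝓝[Ici 0] 0] fun r => ‖u r‖ ^ 2 := by
    refine IsBigO.of_bound C ?_
    filter_upwards [Ico_mem_nhdsGE hr₀] with r hr
    simpa only [norm_pow, norm_norm] using hR r hr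
  have hlin : (fun r : ℝ => r • L) =O[𝓝[Ici 0] 0] fun r => r :=
    IsBigO.of_bound ‖L‖ (Eventually.of_forall fun r => by rw [norm_smul, mul_comm])
  rw [hasDerivWithinAt_iff_isLittleO]
  simpa only [hu0, sub_zero] using sub_isLittleO_of_isBigO_norm_sq htends hquad hlin
end
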